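/- arXiv:2404.01307 — 6 statements merged into one kernel-verified Lean document; each statement's English description precedes it below -/
import Mathlib

section
/- (Integrality of the '+' solution forces the parameter conditions.) Let m, n₀, n₁ be positive integers with gcd(n₀, n₁) = 1 and gcd(n₁, m) = 1, and let x₀, y₀, z₀ be positive rationals with m/n₀ = 1/x₀ + 1/y₀ + 1/z₀. Suppose the polynomials x(λ) = x₀ + x₀·(n₁/n₀)·λ, z(λ) = z₀ + (n₁/n₀)·(y₀·z₀/(y₀+z₀))·λ, y(λ) = y₀ + y₀·(n₁/n₀)·(1 + y₀/(y₀+z₀))·λ + (y₀·n₁/n₀)²·(1/(y₀+z₀))·λ² all have positive integer coefficients. Then there exist positive integers k, l, s, r with x₀ = k·n₀, y₀ = s·n₀, n₁ = l·(m·k − 1), s·n₁ = k·l + r·n₀, and r dividing s·k·l. -/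
open Polynomial

set_option maxHeartbeats 1000000 in
/-- Integrality of the '+' solution forces the parameter conditions: if all the
coefficients of the '+' family polynomials are positive integers, then there
exist positive integers `k, l, s, r` with `x₀ = k·n₀`, `y₀ = s·n₀`,
`n₁ = l·(m·k − 1)`, `s·n₁ = k·l + r·n₀` and `r ∣ s·k·l`. -/
theorem plus_solution_integrality (m n₀ n₁ : ℤ)
    (hm : 0 < m) (hn₀ : 0 < n₀) (hn₁ : 0 < n₁)
    (hcop : Int.gcd n₀ n₁ = 1) (hcop' : Int.gcd n₁ m = 1)
    (x₀ y₀ z₀ : ℚ) (hx₀ : 0 < x₀) (hy₀ : 0 < y₀) (hz₀ : 0 < z₀)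
    (heq : (m : ℚ) / (n₀ : ℚ) = 1 / x₀ + 1 / y₀ + 1 / z₀)
    -- coefficients of x(λ) = x₀ + x₀·(n₁/n₀)·λ are positive integers
    (hx0 : ∃ c : ℤ, 0 < c ∧ x₀ = (c : ℚ))
    (hx1 : ∃ c : ℤ, 0 < c ∧ x₀ * ((n₁ : ℚ) / (n₀ : ℚ)) = (c : ℚ))
    -- coefficients of z(λ) = z₀ + (n₁/n₀)·(y₀·z₀/(y₀+z₀))·λ are positive integers
    (hz0 : ∃ c : ℤ, 0 < c ∧ z₀ = (c : ℚ))
    (hz1 : ∃ c : ℤ, 0 < c ∧ ((n₁ : ℚ) / (n₀ : ℚ)) * (y₀ * z₀ / (y₀ + z₀)) = (c : ℚ))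
    -- coefficients of y(λ) = y₀ + y₀·(n₁/n₀)·(1 + y₀/(y₀+z₀))·λ
    --                          + (y₀·n₁/n₀)²·(1/(y₀+z₀))·λ² are positive integers
    (hy0 : ∃ c : ℤ, 0 < c ∧ y₀ = (c : ℚ))
    (hy1 : ∃ c : ℤ, 0 < c ∧ y₀ * ((n₁ : ℚ) / (n₀ : ℚ)) * (1 + y₀ / (y₀ + z₀)) = (c : ℚ))
    (hy2 : ∃ c : ℤ, 0 < c ∧ (y₀ * (n₁ : ℚ) / (n₀ : ℚ)) ^ 2 * (1 / (y₀ + z₀)) = (c : ℚ)) :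
    ∃ k l s r : ℤ, 0 < k ∧ 0 < l ∧ 0 < s ∧ 0 < r ∧
      x₀ = (k : ℚ) * (n₀ : ℚ) ∧
      y₀ = (s : ℚ) * (n₀ : ℚ) ∧
      n₁ = l * (m * k - 1) ∧
      s * n₁ = k * l + r * n₀ ∧
      r ∣ s * k * l := by

  obtain ⟨a, ha, hax⟩ := hx0
  obtain ⟨b, hb, hby⟩ := hy0
  obtain ⟨c, hc, hcz⟩ := hz0
  obtain ⟨t, ht, htx⟩ := hx1
  obtain ⟨u, hu, huz⟩ := hz1
  obtain ⟨e, he, hey⟩ := hy2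
  have hn₀Q : (n₀ : ℚ) ≠ 0 := Int.cast_ne_zero.mpr hn₀.ne'
  have hn₀Z : (n₀ : ℤ) ≠ 0 := hn₀.ne'
  have hyzQ : y₀ + z₀ ≠ 0 := by positivity
  have hcopI : IsCoprime (n₀ : ℤ) n₁ := Int.isCoprime_iff_gcd_eq_one.mpr hcop
  -- main equation over ℚ, cleared of denominators
  have key : (m : ℚ) * (x₀ * y₀ * z₀) = n₀ * (y₀ * z₀ + x₀ * z₀ + x₀ * y₀) := by
    field_simp at heq
    linarith [heq]
  have hmainZ : m * (a * b * c) = n₀ * (b * c + a * c + a * b) := by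
    exact_mod_cast (by rw [hax, hby, hcz] at key; push_cast at key ⊢; linarith [key] :
      ((m : ℚ) * (a * b * c) = n₀ * ((b:ℚ) * c + a * c + a * b)))
  -- from hx1 : n₀ ∣ a
  have htZ : a * n₁ = t * n₀ := by
    have : (a : ℚ) * n₁ = t * n₀ := by
      rw [hax] at htx
      field_simp at htx
      push_cast
      linarith [htx]
    exact_mod_cast this
  have hdvd_a : n₀ ∣ a := hcopI.dvd_of_dvd_mul_right ⟨t, by linarith [htZ]⟩
  obtain ⟨k, hk⟩ := hdvd_a
  have hkpos : 0 < k := by nlinarith [hk ▸ ha]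
  -- bc(mk-1) = k n₀ (b+c)
  have hbc : b * c * (m * k - 1) = k * n₀ * (b + c) := by
    have h2 : n₀ * (b * c * (m * k - 1)) = n₀ * (k * n₀ * (b + c)) := by
      rw [hk] at hmainZ; ring_nf at hmainZ ⊢; linarith [hmainZ]
    exact mul_left_cancel₀ hn₀Z h2
  have hmk1 : 0 < m * k - 1 := by nlinarith [mul_pos hb hc, mul_pos (mul_pos hkpos hn₀) (by linarith : (0:ℤ) < b + c)]
  -- hz1 over ℤ
  have huZ : n₁ * (b * c) = u * (n₀ * (b + c)) := by
    have : (n₁ : ℚ) * (b * c) = u * (n₀ * (b + c)) := by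
      rw [hby, hcz] at huz hyzQ
      field_simp at huz
      push_cast
      linarith [huz]
    exact_mod_cast this
  have hbcpos : (0:ℤ) < b + c := by linarith
  have hu2 : u * (m * k - 1) = n₁ * k := by
    have h3 : (n₀ * (b + c)) * (u * (m * k - 1)) = (n₀ * (b + c)) * (n₁ * k) := by
      linear_combination (-(m * k - 1)) * huZ + n₁ * hbc
    exact mul_left_cancel₀ (by positivity) h3
  -- (mk - 1) ∣ n₁
  have hcop_k : IsCoprime (m * k - 1) k := ⟨-1, m, by ring⟩
  have hdvd_n₁ : (m * k - 1) ∣ n₁ := hcop_k.dvd_of_dvd_mul_right ⟨u, by linarith [hu2]⟩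
  obtain ⟨l, hl⟩ := hdvd_n₁
  have hlpos : 0 < l := by nlinarith [hl ▸ hn₁]
  -- hy2 over ℤ
  have heZ : (b * n₁) ^ 2 = e * (n₀ ^ 2 * (b + c)) := by
    have : ((b : ℚ) * n₁) ^ 2 = e * (n₀ ^ 2 * (b + c)) := by
      rw [hby, hcz] at hey hyzQ
      field_simp at hey
      push_cast
      linarith [hey]
    exact_mod_cast this
  -- n₀ ∣ b
  have hdvd_b : n₀ ∣ b := by
    have h1 : n₀ ^ 2 ∣ b ^ 2 * n₁ ^ 2 := ⟨e * (b + c), by linear_combination heZ⟩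
    have h2 : n₀ ^ 2 ∣ b ^ 2 := (hcopI.pow).dvd_of_dvd_mul_right h1
    exact (Int.pow_dvd_pow_iff (two_ne_zero)).mp h2
  obtain ⟨s, hs⟩ := hdvd_b
  have hspos : 0 < s := by nlinarith [hs ▸ hb]
  -- c * D = k*s*n₀ where D = s*(m*k-1) - k
  have hcD : c * (s * (m * k - 1) - k) = k * s * n₀ := by
    have h4 : n₀ * (c * (s * (m * k - 1) - k)) = n₀ * (k * s * n₀) := by
      rw [hs] at hbc; ring_nf at hbc ⊢; linarith [hbc]
    exact mul_left_cancel₀ hn₀Z h4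
  have hDpos : 0 < s * (m * k - 1) - k := by
    have hpos : 0 < c * (s * (m * k - 1) - k) := by rw [hcD]; positivity
    rcases mul_pos_iff.mp hpos with ⟨_, h⟩ | ⟨h, _⟩
    · exact h
    · exact absurd hc (not_lt.mpr h.le)
  -- e * n₀ = n₁ * l * D
  have heD : e * n₀ = n₁ * (l * (s * (m * k - 1) - k)) := by
    have h5a : e * (n₀ * s + c) = s ^ 2 * n₁ ^ 2 := by
      rw [hs] at heZ
      have := heZ
      exact mul_left_cancel₀ (pow_ne_zero 2 hn₀Z) (by linear_combination -this)
    have h5 : (s ^ 2 * (m * k - 1)) * (e * n₀) = (s ^ 2 * (m * k - 1)) * (n₁ * (l * (s * (m * k - 1) - k))) := by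
      linear_combination (s * (m * k - 1) - k) * h5a - e * hcD + s ^ 2 * (s * (m * k - 1) - k) * n₁ * hl
    exact mul_left_cancel₀ (by positivity) h5
  have hdvd_lD : n₀ ∣ l * (s * (m * k - 1) - k) := hcopI.dvd_of_dvd_mul_left ⟨e, by linarith [heD]⟩
  obtain ⟨r, hr⟩ := hdvd_lD
  have herZ : e = n₁ * r := by
    have : n₀ * e = n₀ * (n₁ * r) := by rw [hr] at heD; linarith [heD]
    exact mul_left_cancel₀ hn₀Z (by linarith [this])
  have hrpos : 0 < r := by nlinarith [herZ ▸ he]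
  refine ⟨k, l, s, r, hkpos, hlpos, hspos, hrpos, ?_, ?_, ?_, ?_, ?_⟩
  · rw [hax, hk]; push_cast; ring
  · rw [hby, hs]; push_cast; ring
  · linarith [hl]
  · linear_combination s * hl + hr
  · refine ⟨c, ?_⟩
    have h6 : n₀ * (s * k * l) = n₀ * (r * c) := by
      linear_combination c * hr - l * hcD
    exact mul_left_cancel₀ hn₀Z h6
end

section
/- (Arithmetic lemma from the proof of Corollary 4.) Let m ≥ 4 be an integer. Then there are no positive integers k, s, r satisfying both s·(m·k − 1) = k·(m·r + 1) and r ∣ s·k. -/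
/-- Arithmetic lemma from the proof of Corollary 4: for `m ≥ 4` there are no
positive integers `k, s, r` with `s·(m·k − 1) = k·(m·r + 1)` and `r ∣ s·k`. -/
theorem no_positive_solution (m : ℤ) (hm : 4 ≤ m) :
    ¬ ∃ k s r : ℤ, 0 < k ∧ 0 < s ∧ 0 < r ∧
      s * (m * k - 1) = k * (m * r + 1) ∧ r ∣ s * k := by
  rintro ⟨k, s, r, hk, hs, hr, heq, hdvd⟩
  have hmk1 : (1 : ℤ) ≤ m * k - 1 := by nlinarith
  have hcop : IsCoprime (m * k - 1) k := by
    exact ⟨-1, m, by ring⟩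
  have hdvd1 : (m * k - 1) ∣ (m * r + 1) := by
    have : (m * k - 1) ∣ k * (m * r + 1) := ⟨s, by linarith [heq]⟩
    exact (hcop.dvd_of_dvd_mul_left this)
  obtain ⟨t, ht⟩ := hdvd1
  have hst : s = k * t := by
    have hne : (m * k - 1) ≠ 0 := by linarith
    have : s * (m * k - 1) = (k * t) * (m * k - 1) := by rw [heq, ht]; ring
    exact mul_right_cancel₀ hne this
  have htpos : 0 < t := by
    rcases le_or_gt t 0 with h | h
    · nlinarith
    · exact h
  have hma : m * (t * k - r) = t + 1 := by nlinarith [ht]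
  set a := t * k - r with ha
  have hapos : 0 < a := by nlinarith
  have hdvd2 : r ∣ a * k := by
    have h1 : r ∣ t * k * k := by
      rw [show t * k * k = (k * t) * k by ring, ← hst]; exact hdvd
    have h2 : t * k * k = r * k + a * k := by rw [ha]; ring
    have : r ∣ t * k * k - r * k := h1.sub ⟨k, rfl⟩
    rwa [h2, add_sub_cancel_left] at this
  have hgt : a * k < r := by nlinarith
  have hle : r ≤ a * k := Int.le_of_dvd (by positivity) hdvd2
  linarith
end

section
/- (Counterexample to a Schinzel-type restriction for m = 5.) The residue 7 is a quadratic residue modulo 9 (indeed 4² ≡ 7 (mod 9)), and nevertheless for every natural number t, writing n = 7 + 9·t, one has 5/n = 1/(2·n) + 1/((1 + t)·n) + 1/(2·(1 + t)); equivalently, the polynomials x(λ) = 2·(7 + 9·λ), y(λ) = (1 + λ)·(7 + 9·λ), z(λ) = 2·(1 + λ) form an integer polynomial solution of equation (2) with m = 5, n₀ = 7, n₁ = 9. -/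
open Polynomial

/-- `x, y, z ∈ ℤ[λ]` form an integer polynomial solution of equation (2). -/
def IsIntPolySolution (m n₀ n₁ : ℤ) (x y z : Polynomial ℤ) : Prop :=
  (∀ t : ℕ, 0 < x.eval (t : ℤ)) ∧ (∀ t : ℕ, 0 < y.eval (t : ℤ)) ∧
  (∀ t : ℕ, 0 < z.eval (t : ℤ)) ∧
  C m * (x * y * z) = (C n₀ + C n₁ * X) * (x * y + x * z + y * z)

/-- Counterexample to a Schinzel-type restriction for `m = 5`: `7` is a
quadratic residue modulo `9` (indeed `4² ≡ 7 (mod 9)`), yet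
`x(λ) = 2·(7 + 9·λ)`, `y(λ) = (1 + λ)·(7 + 9·λ)`, `z(λ) = 2·(1 + λ)` form an
integer polynomial solution of (2) with `m = 5`, `n₀ = 7`, `n₁ = 9`. -/
theorem counterexample_m5 :
    ((4 : ZMod 9) ^ 2 = 7) ∧
    (∀ t : ℕ, (5 : ℚ) / (7 + 9 * t) =
        1 / (2 * ((7 : ℚ) + 9 * t)) + 1 / ((1 + t) * ((7 : ℚ) + 9 * t)) +
        1 / (2 * ((1 : ℚ) + t))) ∧
    IsIntPolySolution 5 7 9
      (C 2 * (C 7 + C 9 * X))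
      ((C 1 + X) * (C 7 + C 9 * X))
      (C 2 * (C 1 + X)) := by
  refine ⟨by decide, ?_, ?_, ?_, ?_, ?_⟩
  · intro t
    have h1 : (7 : ℚ) + 9 * t > 0 := by positivity
    have h2 : (1 : ℚ) + t > 0 := by positivity
    field_simp
    ring
  · intro t; simp; positivity
  · intro t; simp; positivity
  · intro t; simp; positivity
  · simp only [map_ofNat, map_one]; ring
end

section
/- (Example: n ≡ 7 (mod 19) for m = 5.) Equation (2) with m = 5, n₀ = 7, n₁ = 19 has no integer polynomial solution: there are no polynomials x, y, z ∈ ℤ[λ] with positive values on the natural numbers satisfying 5/(7 + 19·t) = 1/x(t) + 1/y(t) + 1/z(t) for every natural number t. -/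
/-! `𝔫 = 7 + 19λ` is prime in `ℤ[λ]`. Write `x = 𝔫^a u`, `y = 𝔫^b v`, `z = 𝔫^c w` with
`𝔫 ∤ u, v, w` and, by symmetry, `a ≤ b ≤ c`; cancelling `𝔫^(a+b)` leaves
`5 𝔫^c uvw = 𝔫 (uv + 𝔫^(c-b) uw + 𝔫^(c-a) vw)`.

* If `b < c`, then `𝔫` divides `uv (5 𝔫^(c-1) w - 1)`, hence `5 𝔫^(c-1) w - 1`, which is absurd
  at `λ = 2` because `𝔫(2) = 45`.
* If `a = b = c`, then `c > 0` (else `𝔫 ∣ 5uvw`) and the values at `λ = 0` give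
  `5·7^(c-1) uvw = uv + uw + vw`, impossible for positive integers.
* If `a < b = c`, the leading coefficients give `5 ∣ 19^(c-a+1)`, unless `𝔫 (uv + uw)` also has
  top degree, i.e. `a = 0`, `c = 1` and `v` or `w` is a constant, say `w = c₀`. Then
  `(5c₀ - 1) uv = c₀ (u + 𝔫 v)`: for constant `v` this makes `𝔫 ∣ u`, otherwise the leading
  coefficients force `c₀ = 4`, `u = 4λ + β`, and `(19β - 28) v = 16λ + 4β` has no integral
  solution `v`. -/

open Polynomial

namespace IsIntPolySolution

variable {m n₀ n₁ : ℤ} {x y z : ℤ[X]}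

theorem swap_left (h : IsIntPolySolution m n₀ n₁ x y z) : IsIntPolySolution m n₀ n₁ y x z :=
  ⟨h.2.1, h.1, h.2.2.1, by linear_combination h.2.2.2⟩

theorem swap_right (h : IsIntPolySolution m n₀ n₁ x y z) : IsIntPolySolution m n₀ n₁ x z y :=
  ⟨h.1, h.2.2.1, h.2.1, by linear_combination h.2.2.2⟩

end IsIntPolySolution

theorem mul_pow_mul_eq_of_mul_pow_mul_eq {R : Type*} [CommRing R] [IsDomain R] {m π u v w : R}
    {i d e : ℕ} (hπ : π ≠ 0)
    (h : m * (π ^ i * u * (π ^ (i + d) * v) * (π ^ (i + d + e) * w)) =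
      π * (π ^ i * u * (π ^ (i + d) * v) + π ^ i * u * (π ^ (i + d + e) * w) +
        π ^ (i + d) * v * (π ^ (i + d + e) * w))) :
    m * (π ^ (i + d + e) * (u * v * w)) =
      π * (u * v + π ^ e * (u * w) + π ^ (d + e) * (v * w)) :=
  mul_left_cancel₀ (pow_ne_zero (2 * i + d) hπ) (by linear_combination h)

theorem Polynomial.eval_pos_of_eval_pow_mul_pos {R : Type*} [CommRing R] [LinearOrder R]
    [IsStrictOrderedRing R] {π u : R[X]} {t : R} {k : ℕ} (hπ : 0 < π.eval t)
    (h : 0 < (π ^ k * u).eval t) : 0 < u.eval t := by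
  rw [eval_mul, eval_pow] at h
  exact pos_of_mul_pos_right h (pow_pos hπ k).le

theorem Polynomial.leadingCoeff_eq_and_natDegree_eq_of_eq_add {R : Type*} [Ring R]
    {f g h : R[X]} (hfgh : f = g + h) (hg : g.natDegree < f.natDegree) :
    h.leadingCoeff = f.leadingCoeff ∧ h.natDegree = f.natDegree := by
  obtain rfl : h = f - g := eq_sub_of_add_eq' hfgh.symm
  exact ⟨leadingCoeff_sub_of_degree_lt (degree_lt_degree hg),
    natDegree_sub_eq_left_of_natDegree_lt hg⟩

theorem eq_four_of_mul_five_mul_sub_one_eq {a c : ℤ} (hc : 0 < c)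
    (h : a * (5 * c - 1) = 19 * c) : a = 4 ∧ c = 4 := by
  obtain rfl : a = 4 := by
    have : 0 < a := by nlinarith
    apply le_antisymm <;> nlinarith
  omega

theorem nineteen_mul_sub_twentyEight_not_dvd_sixteen (β : ℤ) : ¬ 19 * β - 28 ∣ 16 := by
  intro h
  have := Int.le_of_dvd (by norm_num) h
  have := Int.le_of_dvd (by norm_num) (neg_dvd.mpr h)
  obtain ⟨k, hk⟩ := h
  obtain rfl | rfl : β = 1 ∨ β = 2 := by omega
  all_goals omega

section

local notation "𝔫" => (C 7 + C 19 * X : ℤ[X])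

theorem prime_n : Prime 𝔫 := by
  rw [add_comm]
  exact (irreducible_C_mul_X_add_C (by norm_num) (IsCoprime.isRelPrime ⟨3, -8, by norm_num⟩)).prime

theorem natDegree_n : natDegree 𝔫 = 1 := by compute_degree!

theorem leadingCoeff_n : leadingCoeff 𝔫 = 19 := by
  rw [add_comm, leadingCoeff_linear (by norm_num)]

theorem n_not_dvd_C {k : ℤ} (hk : k ≠ 0) : ¬ 𝔫 ∣ C k := fun h => by
  have := natDegree_le_of_dvd h (C_ne_zero.mpr hk)
  rw [natDegree_n, natDegree_C] at this
  omega

/-- `𝔫(2) = 45` is divisible by `5`. -/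
theorem n_not_dvd_C_five_mul_sub_one (f : ℤ[X]) : ¬ 𝔫 ∣ C 5 * f - 1 := fun h => by
  have := eval_dvd (x := 2) h
  simp only [eval_sub, eval_mul, eval_C, eval_X, eval_add, eval_one] at this
  omega

variable {u v w s : ℤ[X]} {k d : ℕ}

theorem C_five_mul_ne_n_mul (hu : ¬ 𝔫 ∣ u) (hv : ¬ 𝔫 ∣ v) (hw : ¬ 𝔫 ∣ w) :
    C 5 * (u * v * w) ≠ 𝔫 * s := fun h =>
  prime_n.not_dvd_mul (n_not_dvd_C (by norm_num))
    (prime_n.not_dvd_mul (prime_n.not_dvd_mul hu hv) hw) ⟨s, h⟩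

theorem C_five_mul_pow_succ_ne_n_mul_add_n_mul (hu : ¬ 𝔫 ∣ u) (hv : ¬ 𝔫 ∣ v) :
    C 5 * (𝔫 ^ (k + 1) * (u * v * w)) ≠ 𝔫 * (u * v + 𝔫 * s) := fun h => by
  have h' : u * v * (C 5 * (𝔫 ^ k * w) - 1) = 𝔫 * s :=
    mul_left_cancel₀ prime_n.ne_zero (by linear_combination h)
  exact prime_n.not_dvd_mul (prime_n.not_dvd_mul hu hv) (n_not_dvd_C_five_mul_sub_one _) ⟨s, h'⟩

theorem C_five_mul_pow_succ_ne_of_eval_zero_pos (hu : 0 < u.eval 0) (hv : 0 < v.eval 0)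
    (hw : 0 < w.eval 0) :
    C 5 * (𝔫 ^ (k + 1) * (u * v * w)) ≠ 𝔫 * (u * v + u * w + v * w) := fun h => by
  have h0 := congrArg (eval 0) h
  simp only [eval_mul, eval_add, eval_pow, eval_C, eval_X, mul_zero, add_zero] at h0
  generalize eval 0 u = a, eval 0 v = b, eval 0 w = c at *
  have h7 : (1 : ℤ) ≤ 7 ^ k := one_le_pow₀ (by norm_num)
  rw [pow_succ] at h0
  nlinarith [mul_le_mul_of_nonneg_right h7 (mul_pos (mul_pos hu hv) hw).le,
    mul_le_mul_of_nonneg_left (show 1 ≤ c by omega) (mul_pos hu hv).le,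
    mul_le_mul_of_nonneg_left (show 1 ≤ b by omega) (mul_pos hu hw).le,
    mul_le_mul_of_nonneg_left (show 1 ≤ a by omega) (mul_pos hv hw).le]

theorem C_five_mul_pow_ne_of_natDegree_lt (hu : u ≠ 0) (hv : v ≠ 0) (hw : w ≠ 0)
    (hlt : 1 + max v.natDegree w.natDegree < k + v.natDegree + w.natDegree) :
    C 5 * (𝔫 ^ k * (u * v * w)) ≠ 𝔫 * (u * v + u * w + 𝔫 ^ d * (v * w)) := fun h => by
  have hlow : natDegree (𝔫 * (u * v + u * w)) < natDegree (C 5 * (𝔫 ^ k * (u * v * w))) := by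
    have := natDegree_mul_le.trans (add_le_add natDegree_n.le
      ((natDegree_add_le _ _).trans (max_le_max (natDegree_mul_le (p := u) (q := v))
        (natDegree_mul_le (p := u) (q := w)))))
    rw [natDegree_C_mul (by norm_num), natDegree_mul (pow_ne_zero _ prime_n.ne_zero)
      (mul_ne_zero (mul_ne_zero hu hv) hw), natDegree_pow, natDegree_n,
      natDegree_mul (mul_ne_zero hu hv) hw, natDegree_mul hu hv]
    omega
  have hlc := (leadingCoeff_eq_and_natDegree_eq_of_eq_add
    (h.trans (by ring : _ = 𝔫 * (u * v + u * w) + 𝔫 ^ (d + 1) * (v * w))) hlow).1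
  simp only [leadingCoeff_mul, leadingCoeff_pow, leadingCoeff_n, leadingCoeff_C] at hlc
  have : (5 : ℤ) ∣ 19 ^ (d + 1) :=
    ⟨19 ^ k * u.leadingCoeff, mul_right_cancel₀ (mul_ne_zero (leadingCoeff_ne_zero.mpr hv)
      (leadingCoeff_ne_zero.mpr hw)) (by linear_combination hlc)⟩
  exact absurd ((Int.prime_iff_natAbs_prime.mpr (by norm_num)).dvd_of_dvd_pow this) (by norm_num)

theorem mul_C_mul_C_ne {b c : ℤ} (hu : ¬ 𝔫 ∣ u) (hb : 0 < b) (hc : 0 < c) :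
    u * C b * C (5 * c - 1) ≠ C c * u + C c * 𝔫 * C b := fun h => by
  have hk : b * (5 * c - 1) - c ≠ 0 := by nlinarith
  refine prime_n.not_dvd_mul hu (n_not_dvd_C hk) ⟨C (c * b), ?_⟩
  simp only [map_sub, map_mul, map_one] at h ⊢
  linear_combination h

theorem eq_C_four_mul_X_add_C_of_natDegree_ne_zero {c : ℤ} (hu : u ≠ 0) (hv : v.natDegree ≠ 0)
    (hc : 0 < c) (h : u * v * C (5 * c - 1) = C c * u + C c * 𝔫 * v) :
    c = 4 ∧ u = C 4 * X + C (u.coeff 0) := by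
  have hv0 : v ≠ 0 := by rintro rfl; simp at hv
  have hD : C (5 * c - 1) ≠ 0 := C_ne_zero.mpr (by omega)
  have hlt : natDegree (C c * u) < natDegree (u * v * C (5 * c - 1)) := by
    rw [natDegree_C_mul hc.ne', natDegree_mul (mul_ne_zero hu hv0) hD, natDegree_mul hu hv0,
      natDegree_C]
    omega
  obtain ⟨hlc, hdeg⟩ := leadingCoeff_eq_and_natDegree_eq_of_eq_add h hlt
  rw [leadingCoeff_mul, leadingCoeff_mul, leadingCoeff_mul, leadingCoeff_mul, leadingCoeff_C,
    leadingCoeff_C, leadingCoeff_n] at hlc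
  rw [natDegree_mul (mul_ne_zero (C_ne_zero.mpr hc.ne') prime_n.ne_zero) hv0,
    natDegree_C_mul hc.ne', natDegree_n, natDegree_mul (mul_ne_zero hu hv0) hD,
    natDegree_mul hu hv0, natDegree_C] at hdeg
  obtain ⟨ha, rfl⟩ := eq_four_of_mul_five_mul_sub_one_eq (a := u.leadingCoeff) hc
    (mul_right_cancel₀ (leadingCoeff_ne_zero.mpr hv0) (by linear_combination -hlc))
  have hcoeff : u.coeff 1 = 4 := by rw [← ha, leadingCoeff, show u.natDegree = 1 by omega]
  exact ⟨rfl, hcoeff ▸ eq_X_add_C_of_natDegree_le_one (by omega)⟩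

theorem mul_C_ne_of_natDegree_ne_zero {c : ℤ} (hu : u ≠ 0) (hv : v.natDegree ≠ 0) (hc : 0 < c) :
    u * v * C (5 * c - 1) ≠ C c * u + C c * 𝔫 * v := fun h => by
  obtain ⟨rfl, hu4⟩ := eq_C_four_mul_X_add_C_of_natDegree_ne_zero hu hv hc h
  have hv' : C (19 * u.coeff 0 - 28) * v = C 16 * X + C (4 * u.coeff 0) := by
    rw [hu4] at h
    simp only [map_sub, map_mul, map_ofNat, map_one] at h ⊢
    linear_combination h
  apply nineteen_mul_sub_twentyEight_not_dvd_sixteen (u.coeff 0)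
  refine ⟨v.coeff 1, Eq.symm ?_⟩
  simpa only [coeff_C_mul, coeff_add, coeff_X_one, coeff_C, one_ne_zero, if_false, mul_one,
    add_zero] using congrArg (coeff · 1) hv'

theorem C_five_mul_ne_of_natDegree_eq_zero (hu : ¬ 𝔫 ∣ u) (hv : 0 < v.eval 0)
    (hw : 0 < w.eval 0) (hw' : w.natDegree = 0) :
    C 5 * (u * v * w) ≠ u * v + u * w + 𝔫 * (v * w) := fun h => by
  rw [eq_C_of_natDegree_eq_zero hw', coeff_zero_eq_eval_zero] at h
  have h' : u * v * C (5 * w.eval 0 - 1) = C (w.eval 0) * u + C (w.eval 0) * 𝔫 * v := by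
    simp only [map_sub, map_mul, map_ofNat, map_one] at h ⊢
    linear_combination h
  by_cases hv' : v.natDegree = 0
  · rw [eq_C_of_natDegree_eq_zero hv', coeff_zero_eq_eval_zero] at h'
    exact mul_C_mul_C_ne hu hv hw h'
  · exact mul_C_ne_of_natDegree_ne_zero (by rintro rfl; exact hu (dvd_zero _)) hv' hw h'

/-- The equation of a solution `𝔫^i u, 𝔫^(i+d) v, 𝔫^(i+d+e) w`, cancelled by `𝔫^(2i+d)`. -/
theorem C_five_mul_pow_ne {i d e : ℕ} (hu : ¬ 𝔫 ∣ u) (hv : ¬ 𝔫 ∣ v) (hw : ¬ 𝔫 ∣ w)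
    (hu₀ : 0 < u.eval 0) (hv₀ : 0 < v.eval 0) (hw₀ : 0 < w.eval 0) :
    C 5 * (𝔫 ^ (i + d + e) * (u * v * w)) ≠
      𝔫 * (u * v + 𝔫 ^ e * (u * w) + 𝔫 ^ (d + e) * (v * w)) := fun h => by
  obtain _ | e := e
  swap
  · exact C_five_mul_pow_succ_ne_n_mul_add_n_mul hu hv
      (k := i + d + e) (w := w) (s := 𝔫 ^ e * (u * w) + 𝔫 ^ (d + e) * (v * w))
      (by linear_combination h)
  simp only [pow_zero, one_mul, add_zero] at h
  obtain _ | d := d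
  · obtain _ | i := i
    · exact C_five_mul_ne_n_mul hu hv hw (by simpa using h)
    · exact C_five_mul_pow_succ_ne_of_eval_zero_pos hu₀ hv₀ hw₀ (by simpa using h)
  have ne_zero {f : ℤ[X]} (hf : ¬ 𝔫 ∣ f) : f ≠ 0 := by rintro rfl; exact hf (dvd_zero _)
  by_cases hlt : 1 + max v.natDegree w.natDegree < i + (d + 1) + v.natDegree + w.natDegree
  · exact C_five_mul_pow_ne_of_natDegree_lt (ne_zero hu) (ne_zero hv) (ne_zero hw) hlt h
  obtain ⟨rfl, rfl, hvw⟩ : i = 0 ∧ d = 0 ∧ (v.natDegree = 0 ∨ w.natDegree = 0) := by omega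
  have h' : C 5 * (u * v * w) = u * v + u * w + 𝔫 * (v * w) :=
    mul_left_cancel₀ prime_n.ne_zero (by linear_combination h)
  rcases hvw with hv' | hw'
  · exact C_five_mul_ne_of_natDegree_eq_zero hu hw₀ hv₀ hv' (by linear_combination h')
  · exact C_five_mul_ne_of_natDegree_eq_zero hu hv₀ hw₀ hw' h'

theorem not_isIntPolySolution_pow_mul {a b c : ℕ} (hu : ¬ 𝔫 ∣ u) (hv : ¬ 𝔫 ∣ v)
    (hw : ¬ 𝔫 ∣ w) : ¬ IsIntPolySolution 5 7 19 (𝔫 ^ a * u) (𝔫 ^ b * v) (𝔫 ^ c * w) := by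
  wlog hab : a ≤ b generalizing a b c u v w
  · exact fun h => this hv hu hw (by omega) h.swap_left
  wlog hbc : b ≤ c generalizing a b c u v w
  · intro h
    rcases le_total a c with hac | hca
    · exact this hu hw hv hac (by omega) h.swap_right
    · exact this hw hu hv hca hab h.swap_right.swap_left
  rintro ⟨hx, hy, hz, h⟩
  obtain ⟨d, rfl⟩ := Nat.exists_eq_add_of_le hab
  obtain ⟨e, rfl⟩ := Nat.exists_eq_add_of_le hbc
  have hn : 0 < eval 0 𝔫 := by simp
  exact C_five_mul_pow_ne hu hv hw (eval_pos_of_eval_pow_mul_pos hn (hx 0))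
    (eval_pos_of_eval_pow_mul_pos hn (hy 0)) (eval_pos_of_eval_pow_mul_pos hn (hz 0))
    (mul_pow_mul_eq_of_mul_pow_mul_eq prime_n.ne_zero h)

end

/-- Example: equation (2) with `m = 5`, `n ≡ 7 (mod 19)` has no integer
polynomial solution. -/
theorem no_solution_7_mod_19 :
    ¬ ∃ x y z : Polynomial ℤ, IsIntPolySolution 5 7 19 x y z := by
  rintro ⟨x, y, z, hsol⟩
  have ne_zero {f : ℤ[X]} (hf : ∀ t : ℕ, 0 < f.eval (t : ℤ)) : f ≠ 0 := by
    rintro rfl; simpa using hf 0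
  obtain ⟨a, u, hu, rfl⟩ := WfDvdMonoid.max_power_factor (ne_zero hsol.1) prime_n.irreducible
  obtain ⟨b, v, hv, rfl⟩ := WfDvdMonoid.max_power_factor (ne_zero hsol.2.1) prime_n.irreducible
  obtain ⟨c, w, hw, rfl⟩ := WfDvdMonoid.max_power_factor (ne_zero hsol.2.2.1) prime_n.irreducible
  exact not_isIntPolySolution_pow_mul hu hv hw hsol
end

section
/- (No solution with two polynomials of degree at least 2.) Let m, n₀, n₁ be positive integers such that m does not divide n₁. Then there is no integer polynomial solution x, y, z of equation (2) in which at least two of the three polynomials x, y, z have degree at least 2. -/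
open Polynomial

lemma key_dvd (m n₀ n₁ : ℤ) (hm : m ≠ 0) (hn₁ : n₁ ≠ 0)
    (x y z : Polynomial ℤ) (hx : x ≠ 0) (hy : y ≠ 0) (hz : z ≠ 0)
    (heq : C m * (x * y * z) = (C n₀ + C n₁ * X) * (x * y + x * z + y * z))
    (hdx : 2 ≤ x.natDegree) (hdy : 2 ≤ y.natDegree) : m ∣ n₁ := by
  set L : Polynomial ℤ := C n₁ * X + C n₀ with hLdef
  have hLrw : (C n₀ + C n₁ * X : Polynomial ℤ) = L := by rw [hLdef]; ring
  rw [hLrw] at heq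
  set s : Polynomial ℤ := x * y + x * z + y * z with hsdef
  have hLdeg : L.natDegree = 1 := natDegree_linear hn₁
  have hLne : L ≠ 0 := fun h => by simp [h] at hLdeg
  have hCm : (C m : Polynomial ℤ) ≠ 0 := by simpa using hm
  have hLHSne : C m * (x * y * z) ≠ 0 := by
    exact mul_ne_zero hCm (mul_ne_zero (mul_ne_zero hx hy) hz)
  have hsne : s ≠ 0 := by
    intro h
    rw [heq, h, mul_zero] at hLHSne
    exact hLHSne rfl
  have hlx : x.leadingCoeff ≠ 0 := leadingCoeff_ne_zero.2 hx
  have hly : y.leadingCoeff ≠ 0 := leadingCoeff_ne_zero.2 hy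
  have hlz : z.leadingCoeff ≠ 0 := leadingCoeff_ne_zero.2 hz
  -- degrees
  have hLHSdeg : (C m * (x * y * z)).natDegree
      = x.natDegree + y.natDegree + z.natDegree := by
    rw [natDegree_mul hCm (mul_ne_zero (mul_ne_zero hx hy) hz),
      natDegree_mul (mul_ne_zero hx hy) hz, natDegree_mul hx hy, natDegree_C]
    ring
  have hRHSdeg : (L * s).natDegree = 1 + s.natDegree := by
    rw [natDegree_mul hLne hsne, hLdeg]
  have hdegeq : x.natDegree + y.natDegree + z.natDegree = 1 + s.natDegree := by
    rw [← hLHSdeg, heq, hRHSdeg]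
  -- bound on s degree
  have hsle : s.natDegree ≤
      max (max (x.natDegree + y.natDegree) (x.natDegree + z.natDegree))
        (y.natDegree + z.natDegree) := by
    refine (natDegree_add_le _ _).trans ?_
    have h1 : (x * y + x * z).natDegree ≤
        max (x.natDegree + y.natDegree) (x.natDegree + z.natDegree) :=
      (natDegree_add_le _ _).trans
        (max_le_max (natDegree_mul_le) (natDegree_mul_le))
    exact max_le_max h1 natDegree_mul_le
  have hdz1 : z.natDegree ≤ 1 := by
    rcases le_max_iff.mp hsle with h | h
    · rcases le_max_iff.mp h with h' | h' <;> omega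
    · omega
  -- coefficient of s at top degree
  have hxylt : x.natDegree + z.natDegree < x.natDegree + y.natDegree := by omega
  have hyzlt : y.natDegree + z.natDegree < x.natDegree + y.natDegree := by omega
  have hcoeff : s.coeff (x.natDegree + y.natDegree)
      = x.leadingCoeff * y.leadingCoeff := by
    rw [hsdef, coeff_add, coeff_add, coeff_mul_degree_add_degree,
      coeff_eq_zero_of_natDegree_lt (lt_of_le_of_lt natDegree_mul_le hxylt),
      coeff_eq_zero_of_natDegree_lt (lt_of_le_of_lt natDegree_mul_le hyzlt)]
    ring
  have hsdeg : s.natDegree = x.natDegree + y.natDegree := by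
    refine le_antisymm ?_ (le_natDegree_of_ne_zero ?_)
    · refine hsle.trans ?_
      simp only [max_le_iff]
      omega
    · rw [hcoeff]; exact mul_ne_zero hlx hly
  have hzdeg : z.natDegree = 1 := by omega
  -- compare top coefficients
  have hxydeg : (x * y).natDegree = x.natDegree + y.natDegree :=
    natDegree_mul hx hy
  have hLHScoeff : (C m * (x * y * z)).coeff (x.natDegree + y.natDegree + 1)
      = m * (x.leadingCoeff * y.leadingCoeff * z.leadingCoeff) := by
    rw [coeff_C_mul]
    have : x.natDegree + y.natDegree + 1 = (x * y).natDegree + z.natDegree := by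
      rw [hxydeg, hzdeg]
    rw [this, coeff_mul_degree_add_degree, leadingCoeff_mul]
  have hRHScoeff : (L * s).coeff (x.natDegree + y.natDegree + 1)
      = n₁ * (x.leadingCoeff * y.leadingCoeff) := by
    have h1 : x.natDegree + y.natDegree + 1 = L.natDegree + s.natDegree := by
      rw [hLdeg, hsdeg]; ring
    have hsl : s.leadingCoeff = x.leadingCoeff * y.leadingCoeff := by
      rw [leadingCoeff, hsdeg, hcoeff]
    rw [h1, coeff_mul_degree_add_degree, hsl, hLdef, leadingCoeff_linear hn₁]
  have hkey : m * (x.leadingCoeff * y.leadingCoeff * z.leadingCoeff)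
      = n₁ * (x.leadingCoeff * y.leadingCoeff) := by
    rw [← hLHScoeff, ← hRHScoeff, heq]
  have hcancel : m * z.leadingCoeff = n₁ := by
    have h2 : (x.leadingCoeff * y.leadingCoeff) * (m * z.leadingCoeff)
        = (x.leadingCoeff * y.leadingCoeff) * n₁ := by ring_nf; linarith [hkey]
    exact mul_left_cancel₀ (mul_ne_zero hlx hly) h2
  exact ⟨z.leadingCoeff, hcancel.symm⟩

/-- If `m` does not divide `n₁`, no integer polynomial solution of (2) has at
least two of its three polynomials of degree at least 2. -/
theorem no_two_high_degree (m n₀ n₁ : ℤ) (hm : 0 < m) (hn₀ : 0 < n₀) (hn₁ : 0 < n₁)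
    (hndvd : ¬ m ∣ n₁) :
    ¬ ∃ x y z : Polynomial ℤ, IsIntPolySolution m n₀ n₁ x y z ∧
      ((2 ≤ x.natDegree ∧ 2 ≤ y.natDegree) ∨
       (2 ≤ x.natDegree ∧ 2 ≤ z.natDegree) ∨
       (2 ≤ y.natDegree ∧ 2 ≤ z.natDegree)) := by
  rintro ⟨x, y, z, ⟨hpx, hpy, hpz, heq⟩, hdeg⟩
  have hm' : m ≠ 0 := hm.ne'
  have hn₁' : n₁ ≠ 0 := hn₁.ne'
  have hx : x ≠ 0 := fun h => by simpa [h] using hpx 0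
  have hy : y ≠ 0 := fun h => by simpa [h] using hpy 0
  have hz : z ≠ 0 := fun h => by simpa [h] using hpz 0
  rcases hdeg with ⟨h1, h2⟩ | ⟨h1, h2⟩ | ⟨h1, h2⟩
  · exact hndvd (key_dvd m n₀ n₁ hm' hn₁' x y z hx hy hz heq h1 h2)
  · exact hndvd (key_dvd m n₀ n₁ hm' hn₁' x z y hx hz hy
      (by linear_combination heq) h1 h2)
  · exact hndvd (key_dvd m n₀ n₁ hm' hn₁' y z x hy hz hx
      (by linear_combination heq) h1 h2)
end

section
/- (Degree classification of integer polynomial solutions.) Let m, n₀, n₁ be positive integers with m ≥ 4, gcd(n₀, n₁) = 1 and gcd(n₁, m) = 1. If x, y, z is an integer polynomial solution of equation (2), then exactly two of the three polynomials x, y, z have degree 1 and the remaining one has degree 2. -/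
/-!
Positive leading coefficients rule out cancellation in `xy + xz + yz`, so comparing degrees in
`m·xyz = N·(xy + xz + yz)`, `N = n₀ + n₁λ`, forces the smallest degree to be 1, and comparing
leading coefficients forces the middle one to be 1 as well, since otherwise `m ∣ n₁`.
With `y`, `z` linear, `x·(m·yz - N·(y + z)) = N·yz` gives `deg x ≤ 3`.
The polynomial `N` is primitive of degree 1, hence prime in `ℤ[λ]`. If `x`, `y`, `z` are all linear,
it divides each of them and the equation collapses to `m = 1/c + 1/e + 1/f ≤ 3`. If `deg x = 3`,
then `m·yz - N·(y + z)` is a constant `d`, `x = N·w` with `yz = d·w`, and `N ∣ m·w - 1`;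
this is impossible modulo `m`, where `N` keeps its degree because `n₁` is a unit.
-/

open Polynomial

namespace Polynomial

section OrderedSemiring

variable {R : Type*} [Semiring R] [PartialOrder R] [AddLeftStrictMono R] {p q : R[X]}

theorem leadingCoeff_add_pos (hp : 0 < p.leadingCoeff) (hq : 0 < q.leadingCoeff) :
    0 < (p + q).leadingCoeff := by
  rcases lt_trichotomy p.degree q.degree with h | h | h
  · rwa [leadingCoeff_add_of_degree_lt h]
  · rw [leadingCoeff_add_of_degree_eq h (add_pos hp hq).ne']
    exact add_pos hp hq
  · rwa [leadingCoeff_add_of_degree_lt' h]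

theorem natDegree_add_of_leadingCoeff_pos (hp : 0 < p.leadingCoeff) (hq : 0 < q.leadingCoeff) :
    (p + q).natDegree = max p.natDegree q.natDegree := by
  have h := degree_add_eq_of_leadingCoeff_add_ne_zero (add_pos hp hq).ne'
  rw [degree_eq_natDegree (leadingCoeff_ne_zero.1 hp.ne'),
    degree_eq_natDegree (leadingCoeff_ne_zero.1 hq.ne')] at h
  exact natDegree_eq_of_degree_eq_some (by rw [h]; norm_cast)

end OrderedSemiring

theorem leadingCoeff_pos_of_forall_eval_natCast_pos {p : ℤ[X]}
    (h : ∀ t : ℕ, 0 < p.eval (t : ℤ)) : 0 < p.leadingCoeff := by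
  by_contra! hlc
  rcases Nat.eq_zero_or_pos p.natDegree with h0 | hpos
  · have := h 0
    rw [Nat.cast_zero, ← coeff_zero_eq_eval_zero, ← h0] at this
    exact hlc.not_gt this
  · set P := p.map (Int.castRingHom ℝ)
    have hdeg : 0 < P.degree := by
      rw [degree_map_eq_of_injective Int.cast_injective]
      exact natDegree_pos_iff_degree_pos.mp hpos
    have hlc' : P.leadingCoeff ≤ 0 := by
      rw [leadingCoeff_map_of_injective Int.cast_injective, eq_intCast]
      exact_mod_cast hlc
    obtain ⟨a, ha⟩ := ((tendsto_atBot_of_leadingCoeff_nonpos P hdeg hlc').eventually_lt_atBot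
      0).exists_forall_of_atTop
    obtain ⟨t, ht⟩ := exists_nat_ge a
    have hneg := ha t ht
    rw [← Int.cast_natCast, eval_intCast_map, eq_intCast] at hneg
    exact (Int.cast_lt_zero.1 hneg).not_gt (h t)

section Linear

variable {R : Type*} [Semiring R] {a b : R}

theorem natDegree_C_add_C_mul_X (hb : b ≠ 0) : (C a + C b * X).natDegree = 1 := by
  rw [add_comm]
  exact natDegree_linear hb

theorem leadingCoeff_C_add_C_mul_X (hb : b ≠ 0) : (C a + C b * X).leadingCoeff = b := by
  rw [add_comm]
  exact leadingCoeff_linear hb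

end Linear

theorem prime_C_add_C_mul_X {n₀ n₁ : ℤ} (hn₁ : n₁ ≠ 0) (hcop : Int.gcd n₀ n₁ = 1) :
    Prime (C n₀ + C n₁ * X) := by
  rw [add_comm]
  exact (irreducible_C_mul_X_add_C hn₁
    (Int.isCoprime_iff_gcd_eq_one.2 hcop).symm.isRelPrime).prime

section Domain

variable {R : Type*} [CommRing R] [IsDomain R] {N p : R[X]}

theorem not_dvd_C_of_natDegree_pos (hN : 0 < N.natDegree) {k : R} (hk : k ≠ 0) : ¬N ∣ C k :=
  fun h => by simpa using (natDegree_le_of_dvd h (C_ne_zero.2 hk)).trans_lt' hN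

theorem dvd_of_dvd_C_mul (hN : Prime N) (hN0 : 0 < N.natDegree) {k : R} (hk : k ≠ 0)
    (h : N ∣ C k * p) : N ∣ p :=
  (hN.dvd_or_dvd h).resolve_left (not_dvd_C_of_natDegree_pos hN0 hk)

theorem exists_eq_C_mul_of_dvd (h : N ∣ p) (hp : p ≠ 0) (hdeg : p.natDegree ≤ N.natDegree) :
    ∃ e, p = C e * N := by
  obtain ⟨r, rfl⟩ := h
  have hr : r.natDegree = 0 := by
    rw [natDegree_mul (left_ne_zero_of_mul hp) (right_ne_zero_of_mul hp)] at hdeg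
    omega
  exact ⟨r.coeff 0, by rw [mul_comm, ← eq_C_of_natDegree_eq_zero hr]⟩

/-- The hypothesis `h` is the two-term equation `k / (c·N) = 1/u + 1/v`. -/
theorem exists_eq_C_mul_of_C_mul_mul_eq (hN : Prime N) (hN1 : N.natDegree = 1) {k c : R}
    (hk : k ≠ 0) (hc : c ≠ 0) {u v : R[X]} (hu : u.natDegree = 1) (hv : v.natDegree = 1)
    (h : C k * (u * v) = C c * N * (u + v)) : ∃ e f, u = C e * N ∧ v = C f * N := by
  wlog hNu : N ∣ u generalizing u v
  · have hNuv : N ∣ u * v := dvd_of_dvd_C_mul hN (by omega) hk ⟨C c * (u + v), by rw [h]; ring⟩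
    have hNv : N ∣ v := (hN.dvd_or_dvd hNuv).resolve_left hNu
    obtain ⟨f, e, hv', hu'⟩ := this hv hu (by linear_combination h) hNv
    exact ⟨e, f, hu', hv'⟩
  have hu0 : u ≠ 0 := by rintro rfl; simp at hu
  obtain ⟨e, rfl⟩ := exists_eq_C_mul_of_dvd hNu hu0 (by omega)
  have he : e ≠ 0 := by rintro rfl; simp at hu
  have hv' : C (k * e - c) * v = C (c * e) * N := by
    refine mul_left_cancel₀ hN.ne_zero ?_
    simp only [map_sub, map_mul]
    linear_combination h
  have hke : k * e - c ≠ 0 := by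
    rintro hke
    rw [hke, C_0, zero_mul] at hv'
    exact mul_ne_zero (C_ne_zero.2 (mul_ne_zero hc he)) hN.ne_zero hv'.symm
  have hv0 : v ≠ 0 := by rintro rfl; simp at hv
  have hNv : N ∣ v := dvd_of_dvd_C_mul hN (by omega) hke ⟨C (c * e), hv'.trans (mul_comm _ _)⟩
  obtain ⟨f, rfl⟩ := exists_eq_C_mul_of_dvd hNv hv0 (by omega)
  exact ⟨e, f, rfl, rfl⟩

end Domain

theorem not_dvd_C_mul_sub_one {m : ℤ} (hm : ¬IsUnit m) {N : ℤ[X]} (hN : 0 < N.natDegree)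
    (hcop : IsCoprime N.leadingCoeff m) (w : ℤ[X]) : ¬N ∣ C m * w - 1 := by
  rintro ⟨u, hu⟩
  let f := Int.castRingHom (ZMod m.natAbs)
  have : Nontrivial (ZMod m.natAbs) :=
    ZMod.nontrivial_iff.2 (by rwa [Int.isUnit_iff_natAbs_eq] at hm)
  have hm0 : (m : ZMod m.natAbs) = 0 :=
    (CharP.intCast_eq_zero_iff _ m.natAbs m).2 Int.natAbs_dvd_self
  have hlc : IsUnit (f N.leadingCoeff) :=
    isCoprime_zero_right.1 (by simpa [f, hm0] using hcop.map f)
  have hNu : N.map f * u.map f = -1 := by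
    have := congrArg (map f) hu
    rw [Polynomial.map_sub, Polynomial.map_mul, Polynomial.map_mul, map_C,
      Polynomial.map_one] at this
    simp only [f, eq_intCast, hm0, C_0, zero_mul, zero_sub] at this
    exact this.symm
  have hu0 : u.map f ≠ 0 := fun h0 => by simp [h0] at hNu
  have hdeg := natDegree_mul' (p := N.map f) (q := u.map f) (by
    rw [leadingCoeff_map_of_leadingCoeff_ne_zero f hlc.ne_zero]
    exact fun h0 => hu0 (leadingCoeff_eq_zero.1 (hlc.mul_right_eq_zero.1 h0)))
  rw [hNu, natDegree_map_of_leadingCoeff_ne_zero f hlc.ne_zero, natDegree_neg,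
    natDegree_one] at hdeg
  omega

end Polynomial

theorem natDegree_lt_three_of_mul_eq {m n₀ n₁ : ℤ} {x y z : ℤ[X]} (hm : ¬IsUnit m)
    (hn₁ : n₁ ≠ 0) (hcop : Int.gcd n₀ n₁ = 1) (hcop' : IsCoprime n₁ m)
    (hy : y.natDegree = 1) (hz : z.natDegree = 1)
    (hE : C m * (x * y * z) = (C n₀ + C n₁ * X) * (x * y + x * z + y * z)) :
    x.natDegree < 3 := by
  have hN := prime_C_add_C_mul_X hn₁ hcop
  have hN1 := natDegree_C_add_C_mul_X (a := n₀) hn₁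
  have hy0 : y ≠ 0 := by rintro rfl; simp at hy
  have hz0 : z ≠ 0 := by rintro rfl; simp at hz
  have hxD : x * (C m * (y * z) - (C n₀ + C n₁ * X) * (y + z)) =
      (C n₀ + C n₁ * X) * (y * z) := by
    linear_combination hE
  have hxD0 := hxD ▸ mul_ne_zero hN.ne_zero (mul_ne_zero hy0 hz0)
  have hD0 := right_ne_zero_of_mul hxD0
  have hdeg := congrArg natDegree hxD
  rw [natDegree_mul (left_ne_zero_of_mul hxD0) hD0, natDegree_mul hN.ne_zero
    (mul_ne_zero hy0 hz0), natDegree_mul hy0 hz0, hN1, hy, hz] at hdeg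
  by_contra! hx
  obtain ⟨d, hd⟩ : ∃ d, C m * (y * z) - (C n₀ + C n₁ * X) * (y + z) = C d :=
    ⟨_, eq_C_of_natDegree_eq_zero (by omega)⟩
  have hd0 : d ≠ 0 := by rintro rfl; exact hD0 (hd.trans C_0)
  rw [hd] at hxD
  obtain ⟨w, rfl⟩ := dvd_of_dvd_C_mul hN (by omega) hd0 ⟨y * z, by rw [mul_comm, hxD]⟩
  have hyz : y * z = C d * w := mul_left_cancel₀ hN.ne_zero (by linear_combination -hxD)
  have hNw : C n₀ + C n₁ * X ∣ C d * (C m * w - 1) :=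
    ⟨y + z, by linear_combination hd - C m * hyz⟩
  exact not_dvd_C_mul_sub_one hm (by omega) (by rwa [leadingCoeff_C_add_C_mul_X hn₁]) w
    (dvd_of_dvd_C_mul hN (by omega) hd0 hNw)

namespace IsIntPolySolution

variable {m n₀ n₁ : ℤ} {x y z : ℤ[X]} (h : IsIntPolySolution m n₀ n₁ x y z)
include h

theorem swap₁₂ : IsIntPolySolution m n₀ n₁ y x z :=
  ⟨h.2.1, h.1, h.2.2.1, by linear_combination h.2.2.2⟩

theorem swap₂₃ : IsIntPolySolution m n₀ n₁ x z y :=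
  ⟨h.1, h.2.2.1, h.2.1, by linear_combination h.2.2.2⟩

theorem swap₁₃ : IsIntPolySolution m n₀ n₁ z y x :=
  ⟨h.2.2.1, h.2.1, h.1, by linear_combination h.2.2.2⟩

theorem leadingCoeff_pos : 0 < x.leadingCoeff ∧ 0 < y.leadingCoeff ∧ 0 < z.leadingCoeff :=
  ⟨leadingCoeff_pos_of_forall_eval_natCast_pos h.1,
    leadingCoeff_pos_of_forall_eval_natCast_pos h.2.1,
    leadingCoeff_pos_of_forall_eval_natCast_pos h.2.2.1⟩

theorem natDegree_eq_one_of_le (hm : m ≠ 0) (hn₁ : n₁ ≠ 0) (hyx : y.natDegree ≤ x.natDegree)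
    (hzy : z.natDegree ≤ y.natDegree) : z.natDegree = 1 := by
  obtain ⟨ha, hb, hc⟩ := h.leadingCoeff_pos
  have hx0 := leadingCoeff_ne_zero.1 ha.ne'
  have hy0 := leadingCoeff_ne_zero.1 hb.ne'
  have hz0 := leadingCoeff_ne_zero.1 hc.ne'
  have hxy : 0 < (x * y).leadingCoeff := by rw [leadingCoeff_mul]; positivity
  have hxz : 0 < (x * z).leadingCoeff := by rw [leadingCoeff_mul]; positivity
  have hyz : 0 < (y * z).leadingCoeff := by rw [leadingCoeff_mul]; positivity
  have hP0 :=
    leadingCoeff_ne_zero.1 (leadingCoeff_add_pos (leadingCoeff_add_pos hxy hxz) hyz).ne'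
  have hP : (x * y + x * z + y * z).natDegree = x.natDegree + y.natDegree := by
    rw [natDegree_add_of_leadingCoeff_pos (leadingCoeff_add_pos hxy hxz) hyz,
      natDegree_add_of_leadingCoeff_pos hxy hxz, natDegree_mul hx0 hy0, natDegree_mul hx0 hz0,
      natDegree_mul hy0 hz0]
    omega
  have hN0 : C n₀ + C n₁ * X ≠ 0 := ne_zero_of_natDegree_gt (natDegree_C_add_C_mul_X hn₁).ge
  have hdeg := congrArg natDegree h.2.2.2
  rw [natDegree_C_mul hm, natDegree_mul (mul_ne_zero hx0 hy0) hz0, natDegree_mul hx0 hy0,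
    natDegree_mul hN0 hP0, natDegree_C_add_C_mul_X hn₁, hP] at hdeg
  omega

theorem mul_leadingCoeff_eq (hn₁ : n₁ ≠ 0) (hzx : z.natDegree < x.natDegree)
    (hzy : z.natDegree < y.natDegree) : m * z.leadingCoeff = n₁ := by
  obtain ⟨ha, hb, hc⟩ := h.leadingCoeff_pos
  have hx0 := leadingCoeff_ne_zero.1 ha.ne'
  have hy0 := leadingCoeff_ne_zero.1 hb.ne'
  have hz0 := leadingCoeff_ne_zero.1 hc.ne'
  have hP : (x * y + x * z + y * z).leadingCoeff = x.leadingCoeff * y.leadingCoeff := by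
    have hlt : (x * z + y * z).natDegree < (x * y).natDegree := by
      refine (natDegree_add_le _ _).trans_lt ?_
      rw [natDegree_mul hx0 hz0, natDegree_mul hy0 hz0, natDegree_mul hx0 hy0]
      omega
    rw [add_assoc, leadingCoeff_add_of_degree_lt' (degree_lt_degree hlt), leadingCoeff_mul]
  have hlc := congrArg leadingCoeff h.2.2.2
  simp only [leadingCoeff_mul, leadingCoeff_C, hP, leadingCoeff_C_add_C_mul_X hn₁] at hlc
  exact mul_left_cancel₀ (mul_ne_zero ha.ne' hb.ne') (by linear_combination hlc)

theorem false_of_natDegree_eq_one (hm : 4 ≤ m) (hn₁ : 0 < n₁) (hcop : Int.gcd n₀ n₁ = 1)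
    (hx : x.natDegree = 1) (hy : y.natDegree = 1) (hz : z.natDegree = 1) : False := by
  have hN := prime_C_add_C_mul_X hn₁.ne' hcop
  have hN1 := natDegree_C_add_C_mul_X (a := n₀) hn₁.ne'
  wlog hNx : C n₀ + C n₁ * X ∣ x generalizing x y z
  · have hNxyz : C n₀ + C n₁ * X ∣ x * y * z :=
      dvd_of_dvd_C_mul hN (by omega) (by omega : m ≠ 0) ⟨_, h.2.2.2⟩
    rcases hN.dvd_or_dvd hNxyz with hNxy | hNz
    · exact (hN.dvd_or_dvd hNxy).elim hNx (this h.swap₁₂ hy hx hz)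
    · exact this h.swap₁₃ hz hy hx hNz
  have hx0 : x ≠ 0 := by rintro rfl; simp at hx
  obtain ⟨c, rfl⟩ := exists_eq_C_mul_of_dvd hNx hx0 (by omega)
  have hcoeff_pos (e : ℤ) (he : 0 < (C e * (C n₀ + C n₁ * X)).leadingCoeff) : 0 < e := by
    rw [leadingCoeff_mul, leadingCoeff_C, leadingCoeff_C_add_C_mul_X hn₁.ne'] at he
    exact pos_of_mul_pos_left he hn₁.le
  have hc := hcoeff_pos c h.leadingCoeff_pos.1
  have hyz : C (m * c - 1) * (y * z) = C c * (C n₀ + C n₁ * X) * (y + z) := by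
    refine mul_left_cancel₀ hN.ne_zero ?_
    simp only [map_sub, map_mul, map_one]
    linear_combination h.2.2.2
  obtain ⟨e, f, rfl, rfl⟩ :=
    exists_eq_C_mul_of_C_mul_mul_eq hN hN1 (by nlinarith) hc.ne' hy hz hyz
  have he := hcoeff_pos e h.leadingCoeff_pos.2.1
  have hf := hcoeff_pos f h.leadingCoeff_pos.2.2
  have hcef : m * c * e * f = c * e + c * f + e * f := by
    refine C_inj.1 (mul_right_cancel₀ (pow_ne_zero 3 hN.ne_zero) ?_)
    simp only [map_add, map_mul]
    linear_combination h.2.2.2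
  nlinarith [mul_pos (mul_pos hc he) hf, mul_pos hc he, mul_pos hc hf, mul_pos he hf]

end IsIntPolySolution

theorem degree_classification_general (m n₀ n₁ : ℤ) (hm : 4 ≤ m) (hn₁ : 0 < n₁)
    (hcop : Int.gcd n₀ n₁ = 1) (hcop' : Int.gcd n₁ m = 1)
    (x y z : Polynomial ℤ) (hsol : IsIntPolySolution m n₀ n₁ x y z) :
    (x.natDegree = 2 ∧ y.natDegree = 1 ∧ z.natDegree = 1) ∨
    (x.natDegree = 1 ∧ y.natDegree = 2 ∧ z.natDegree = 1) ∨
    (x.natDegree = 1 ∧ y.natDegree = 1 ∧ z.natDegree = 2) := by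
  wlog hyx : y.natDegree ≤ x.natDegree generalizing x y z
  · have := this y x z hsol.swap₁₂ (by omega)
    omega
  wlog hzy : z.natDegree ≤ y.natDegree generalizing x y z
  · rcases le_total z.natDegree x.natDegree with hzx | hxz
    · have := this x z y hsol.swap₂₃ hzx (by omega)
      omega
    · have := this z x y hsol.swap₁₃.swap₂₃ hxz hyx
      omega
  have hmu : ¬IsUnit m := by rw [Int.isUnit_iff]; omega
  have hcop'' : IsCoprime n₁ m := Int.isCoprime_iff_gcd_eq_one.2 hcop'
  have hz : z.natDegree = 1 := hsol.natDegree_eq_one_of_le (by omega) hn₁.ne' hyx hzy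
  have hy : y.natDegree = 1 := by
    by_contra hy
    have hmz := hsol.mul_leadingCoeff_eq hn₁.ne' (by omega) (by omega)
    exact hmu (hcop''.isUnit_of_dvd' ⟨_, hmz.symm⟩ dvd_rfl)
  have hx3 := natDegree_lt_three_of_mul_eq hmu hn₁.ne' hcop hcop'' hy hz hsol.2.2.2
  have hx1 : x.natDegree ≠ 1 := fun hx => hsol.false_of_natDegree_eq_one hm hn₁ hcop hx hy hz
  omega

/-- Degree classification: in any integer polynomial solution of (2), exactly
two of the polynomials have degree 1 and the remaining one has degree 2. -/
theorem degree_classification (m n₀ n₁ : ℤ) (hm : 4 ≤ m) (hn₀ : 0 < n₀) (hn₁ : 0 < n₁)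
    (hcop : Int.gcd n₀ n₁ = 1) (hcop' : Int.gcd n₁ m = 1)
    (x y z : Polynomial ℤ) (hsol : IsIntPolySolution m n₀ n₁ x y z) :
    (x.natDegree = 2 ∧ y.natDegree = 1 ∧ z.natDegree = 1) ∨
    (x.natDegree = 1 ∧ y.natDegree = 2 ∧ z.natDegree = 1) ∨
    (x.natDegree = 1 ∧ y.natDegree = 1 ∧ z.natDegree = 2) :=
  degree_classification_general m n₀ n₁ hm hn₁ hcop hcop' x y z hsol
end
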